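/- arXiv:2404.19227 — 3 statements merged into one kernel-verified Lean document; each statement's English description precedes it below -/
import Mathlib

section
/- Let E be a real inner product space, and let c ∈ E be nonzero. For every nonzero x ∈ E, the norm of the gradient at x of the cosine-similarity map y ↦ ⟪y, c⟫ / (‖y‖ · ‖c‖) equals √(1 − cos(x,c)²) / ‖x‖, where cos(x,c) := ⟪x, c⟫ / (‖x‖ · ‖c‖). -/
/-!
The gradient at `x` is `(‖x‖ * ‖c‖)⁻¹` times the component of `c` orthogonal to `x`, and by
Pythagoras that component has squared length `‖c‖ ^ 2 * (1 - cos (x, c) ^ 2)`.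
-/

open scoped RealInnerProductSpace

section

variable {E : Type*} [NormedAddCommGroup E] [InnerProductSpace ℝ E]

theorem hasStrictFDerivAt_norm {x : E} (hx : x ≠ 0) :
    HasStrictFDerivAt (‖·‖) (‖x‖⁻¹ • innerSL ℝ x) x := by
  have h := (hasStrictFDerivAt_norm_sq x).sqrt (pow_ne_zero 2 (norm_ne_zero_iff.mpr hx))
  simp only [Real.sqrt_sq (norm_nonneg _)] at h
  refine h.congr_fderiv ?_
  ext v
  simp only [smul_apply, innerSL_apply_apply, smul_eq_mul, nsmul_eq_mul, Nat.cast_ofNat]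
  field_simp

theorem hasFDerivAt_inv_norm {x : E} (hx : x ≠ 0) :
    HasFDerivAt (fun y : E => ‖y‖⁻¹) (-(‖x‖ ^ 3)⁻¹ • innerSL ℝ x) x := by
  have h := (hasDerivAt_inv (norm_ne_zero_iff.mpr hx)).comp_hasFDerivAt x
    (hasStrictFDerivAt_norm hx).hasFDerivAt
  refine h.congr_fderiv ?_
  rw [smul_smul, neg_mul, ← mul_inv, ← pow_succ]

theorem hasFDerivAt_inner_div_norm (c : E) {x : E} (hx : x ≠ 0) :
    HasFDerivAt (fun y : E => ⟪y, c⟫ / ‖y‖)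
      (innerSL ℝ (‖x‖⁻¹ • (c - (⟪x, c⟫ / ‖x‖ ^ 2) • x))) x := by
  have h : HasFDerivAt (fun y : E => ⟪c, y⟫ * ‖y‖⁻¹)
      (⟪c, x⟫ • (-(‖x‖ ^ 3)⁻¹ • innerSL ℝ x) + ‖x‖⁻¹ • innerSL ℝ c) x :=
    (innerSL ℝ c).hasFDerivAt.mul (hasFDerivAt_inv_norm hx)
  simp only [← real_inner_comm c, ← div_eq_mul_inv] at h
  refine h.congr_fderiv ?_
  ext v
  have hx₀ : ‖x‖ ≠ 0 := norm_ne_zero_iff.mpr hx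
  simp only [real_inner_comm c, neg_smul, smul_neg, add_apply, neg_apply, smul_apply,
    coe_innerSL_apply, smul_eq_mul, map_smul, map_sub, sub_apply]
  field_simp
  ring

theorem norm_sub_inner_div_norm_sq_smul_sq (x c : E) :
    ‖c - (⟪x, c⟫ / ‖x‖ ^ 2) • x‖ ^ 2 = ‖c‖ ^ 2 - ⟪x, c⟫ ^ 2 / ‖x‖ ^ 2 := by
  rcases eq_or_ne x 0 with rfl | hx
  · simp
  have hx₀ : ‖x‖ ≠ 0 := norm_ne_zero_iff.mpr hx
  rw [norm_sub_sq_real, norm_smul, inner_smul_right, mul_pow, Real.norm_eq_abs, sq_abs,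
    real_inner_comm x c]
  field_simp
  ring

theorem hasGradientAt_inner_div_norm_mul_norm [CompleteSpace E] (c : E) {x : E} (hx : x ≠ 0) :
    HasGradientAt (fun y : E => ⟪y, c⟫ / (‖y‖ * ‖c‖))
      ((‖x‖ * ‖c‖)⁻¹ • (c - (⟪x, c⟫ / ‖x‖ ^ 2) • x)) x := by
  rw [hasGradientAt_iff_hasFDerivAt]
  have h := (hasFDerivAt_inner_div_norm c hx).const_mul ‖c‖⁻¹
  simp only [← div_eq_inv_mul, div_div] at h
  refine h.congr_fderiv ?_
  ext v
  simp [smul_smul]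

end

theorem cosine_similarity_gradient_norm
    {E : Type*} [NormedAddCommGroup E] [InnerProductSpace ℝ E] [CompleteSpace E]
    (c : E) (hc : c ≠ 0) (x : E) (hx : x ≠ 0) :
    ‖gradient (fun y => (inner ℝ y c : ℝ) / (‖y‖ * ‖c‖)) x‖ =
      Real.sqrt (1 - ((inner ℝ x c : ℝ) / (‖x‖ * ‖c‖)) ^ 2) / ‖x‖ := by
  have hx₀ : ‖x‖ ≠ 0 := norm_ne_zero_iff.mpr hx
  have hc₀ : ‖c‖ ≠ 0 := norm_ne_zero_iff.mpr hc
  set G := (‖x‖ * ‖c‖)⁻¹ • (c - (⟪x, c⟫ / ‖x‖ ^ 2) • x)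
  have hG : ‖G‖ ^ 2 = (1 - (⟪x, c⟫ / (‖x‖ * ‖c‖)) ^ 2) / ‖x‖ ^ 2 := by
    rw [norm_smul, mul_pow, norm_sub_inner_div_norm_sq_smul_sq, norm_inv, norm_mul, norm_norm,
      norm_norm]
    field_simp
  rw [(hasGradientAt_inner_div_norm_mul_norm c hx).gradient, ← Real.sqrt_sq (norm_nonneg G), hG,
    Real.sqrt_div' _ (sq_nonneg _), Real.sqrt_sq (norm_nonneg _)]
end

section
/- Let E be a real inner product space, τ > 0, and c^u, c^a ∈ E nonzero. Define g(x) := exp(τ·cos(x,c^u)) / (exp(τ·cos(x,c^u)) + exp(τ·cos(x,c^a))) for x ≠ 0, where cos(x,c) := ⟪x, c⟫ / (‖x‖ · ‖c‖). Then g is differentiable at every nonzero x ∈ E, and the norm of its gradient at x is at most τ / (2‖x‖). -/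
/-- Cosine similarity of two vectors in a real inner product space. -/
noncomputable def cosSim {E : Type*} [NormedAddCommGroup E] [InnerProductSpace ℝ E]
    (x c : E) : ℝ :=
  (inner ℝ x c : ℝ) / (‖x‖ * ‖c‖)

/-- The Espresso confidence function
`g(x) = exp(τ·cos(x,cᵘ)) / (exp(τ·cos(x,cᵘ)) + exp(τ·cos(x,cᵃ)))`. -/
noncomputable def espressoG {E : Type*} [NormedAddCommGroup E] [InnerProductSpace ℝ E]
    (τ : ℝ) (cu ca : E) (x : E) : ℝ :=
  Real.exp (τ * cosSim x cu) /
    (Real.exp (τ * cosSim x cu) + Real.exp (τ * cosSim x ca))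

/-!
Dividing numerator and denominator by `exp (τ cos(x, cᵘ))` shows that `g` is the logistic
function `σ` applied to `τ (cos(x, cᵘ) - cos(x, cᵃ))`, and `σ' = σ (1 - σ) ≤ 1/4`.
The gradient of `y ↦ cos(y, c)` at `x` is the component of `c` orthogonal to `x`, divided by
`‖x‖ ‖c‖`, so its norm is at most `1/‖x‖`. Hence `‖∇g(x)‖ ≤ (1/4) · τ · (2/‖x‖)`.
-/

open Real InnerProductSpace

theorem exp_div_exp_add_exp (a b : ℝ) : exp a / (exp a + exp b) = sigmoid (a - b) := by
  rw [sigmoid_def, neg_sub, exp_sub]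
  field_simp

theorem sigmoid_mul_one_sub_sigmoid_le (t : ℝ) : sigmoid t * (1 - sigmoid t) ≤ 4⁻¹ := by
  nlinarith [sq_nonneg (2 * sigmoid t - 1)]

theorem Submodule.norm_sub_starProjection_le {𝕜 E : Type*} [RCLike 𝕜] [NormedAddCommGroup E]
    [InnerProductSpace 𝕜 E] (K : Submodule 𝕜 E) [K.HasOrthogonalProjection] (v : E) :
    ‖v - K.starProjection v‖ ≤ ‖v‖ := by
  simpa [Submodule.starProjection_orthogonal'] using Kᗮ.norm_starProjection_apply_le v

section Gradient

variable {F : Type*} [NormedAddCommGroup F] [InnerProductSpace ℝ F] [CompleteSpace F]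
  {f g : F → ℝ} {f' g' x : F}

theorem HasGradientAt.sub (hf : HasGradientAt f f' x) (hg : HasGradientAt g g' x) :
    HasGradientAt (fun y ↦ f y - g y) (f' - g') x := by
  rw [hasGradientAt_iff_hasFDerivAt, map_sub] at *
  exact hf.sub hg

theorem HasGradientAt.const_mul (c : ℝ) (hf : HasGradientAt f f' x) :
    HasGradientAt (fun y ↦ c * f y) (c • f') x := by
  rw [hasGradientAt_iff_hasFDerivAt] at *
  simpa using hf.const_mul c

theorem HasGradientAt.mul (hf : HasGradientAt f f' x) (hg : HasGradientAt g g' x) :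
    HasGradientAt (fun y ↦ f y * g y) (f x • g' + g x • f') x := by
  rw [hasGradientAt_iff_hasFDerivAt, map_add, map_smul, map_smul] at *
  exact hf.mul hg

theorem HasDerivAt.comp_hasGradientAt {h : ℝ → ℝ} {h' : ℝ} (hh : HasDerivAt h h' (f x))
    (hf : HasGradientAt f f' x) : HasGradientAt (h ∘ f) (h' • f') x := by
  rw [hasGradientAt_iff_hasFDerivAt] at *
  simpa using hh.comp_hasFDerivAt x hf

theorem hasGradientAt_inner_left (c x : F) : HasGradientAt (fun y ↦ ⟪y, c⟫_ℝ) c x := by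
  rw [hasGradientAt_iff_hasFDerivAt]
  exact (toDual ℝ F c).hasFDerivAt.congr_of_eventuallyEq
    (.of_forall fun y ↦ by simp [real_inner_comm])

theorem hasGradientAt_norm (hx : x ≠ 0) : HasGradientAt (‖·‖) (‖x‖⁻¹ • x) x := by
  have hsqrt := (hasStrictFDerivAt_norm_sq x).hasFDerivAt.sqrt (by positivity)
  simp only [Real.sqrt_sq (norm_nonneg _)] at hsqrt
  rw [hasGradientAt_iff_hasFDerivAt]
  refine hsqrt.congr_fderiv ?_
  ext v
  simp only [smul_apply, coe_innerSL_apply, map_smul, toDual_apply_apply, smul_eq_mul,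
    nsmul_eq_mul, Nat.cast_ofNat]
  field_simp

end Gradient

section CosSim

variable {E : Type*} [NormedAddCommGroup E] [InnerProductSpace ℝ E]

noncomputable def cosSimGrad (x c : E) : E :=
  (‖x‖ * ‖c‖)⁻¹ • (c - (ℝ ∙ x).starProjection c)

theorem norm_cosSimGrad_le (x c : E) : ‖cosSimGrad x c‖ ≤ ‖x‖⁻¹ := by
  rw [cosSimGrad, norm_smul, norm_inv, norm_mul, norm_norm, norm_norm, mul_inv]
  calc ‖x‖⁻¹ * ‖c‖⁻¹ * ‖c - (ℝ ∙ x).starProjection c‖ ≤ ‖x‖⁻¹ * (‖c‖⁻¹ * ‖c‖) := by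
        rw [mul_assoc]; gcongr; exact (ℝ ∙ x).norm_sub_starProjection_le c
    _ ≤ ‖x‖⁻¹ := mul_le_of_le_one_right (by positivity) inv_mul_le_one

theorem hasGradientAt_cosSim [CompleteSpace E] (c : E) {x : E} (hx : x ≠ 0) :
    HasGradientAt (cosSim · c) (cosSimGrad x c) x := by
  have hinv : HasGradientAt (fun y : E ↦ ‖y‖⁻¹) (-(‖x‖ ^ 2)⁻¹ • ‖x‖⁻¹ • x) x :=
    (hasDerivAt_inv (norm_ne_zero_iff.mpr hx)).comp_hasGradientAt (hasGradientAt_norm hx)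
  convert ((hasGradientAt_inner_left c x).mul hinv).const_mul ‖c‖⁻¹ using 1
  · funext y
    rw [cosSim]
    ring
  · rw [cosSimGrad, Submodule.starProjection_singleton, RCLike.ofReal_real_eq_id, id]
    module

end CosSim

theorem espressoG_eq_sigmoid {E : Type*} [NormedAddCommGroup E] [InnerProductSpace ℝ E]
    (τ : ℝ) (cu ca : E) :
    espressoG τ cu ca = fun y ↦ sigmoid (τ * (cosSim y cu - cosSim y ca)) := by
  funext y
  rw [espressoG, exp_div_exp_add_exp, mul_sub]

theorem espresso_gradient_bound_general
    {E : Type*} [NormedAddCommGroup E] [InnerProductSpace ℝ E] [CompleteSpace E]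
    (τ : ℝ) (hτ : 0 < τ) (cu ca : E)
    (x : E) (hx : x ≠ 0) :
    DifferentiableAt ℝ (espressoG τ cu ca) x ∧
    ‖gradient (espressoG τ cu ca) x‖ ≤ τ / (2 * ‖x‖) := by
  have hgap : HasGradientAt (fun y ↦ τ * (cosSim y cu - cosSim y ca))
      (τ • (cosSimGrad x cu - cosSimGrad x ca)) x :=
    ((hasGradientAt_cosSim cu hx).sub (hasGradientAt_cosSim ca hx)).const_mul τ
  set s := sigmoid (τ * (cosSim x cu - cosSim x ca))
  have hg : HasGradientAt (espressoG τ cu ca)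
      ((s * (1 - s)) • τ • (cosSimGrad x cu - cosSimGrad x ca)) x := by
    rw [espressoG_eq_sigmoid]
    exact (hasDerivAt_sigmoid _).comp_hasGradientAt hgap
  refine ⟨hg.differentiableAt, ?_⟩
  have hs : 0 ≤ s * (1 - s) := mul_nonneg (sigmoid_nonneg _) (sub_nonneg.mpr (sigmoid_le_one _))
  calc ‖gradient (espressoG τ cu ca) x‖
      = s * (1 - s) * (τ * ‖cosSimGrad x cu - cosSimGrad x ca‖) := by
        rw [hg.gradient, norm_smul, norm_smul, Real.norm_of_nonneg hs, Real.norm_of_nonneg hτ.le]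
    _ ≤ 4⁻¹ * (τ * (‖x‖⁻¹ + ‖x‖⁻¹)) := by
        gcongr
        · exact sigmoid_mul_one_sub_sigmoid_le _
        · exact (norm_sub_le _ _).trans
            (add_le_add (norm_cosSimGrad_le x cu) (norm_cosSimGrad_le x ca))
    _ = τ / (2 * ‖x‖) := by field_simp; ring

theorem espresso_gradient_bound
    {E : Type*} [NormedAddCommGroup E] [InnerProductSpace ℝ E] [CompleteSpace E]
    (τ : ℝ) (hτ : 0 < τ) (cu ca : E) (hcu : cu ≠ 0) (hca : ca ≠ 0)
    (x : E) (hx : x ≠ 0) :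
    DifferentiableAt ℝ (espressoG τ cu ca) x ∧
    ‖gradient (espressoG τ cu ca) x‖ ≤ τ / (2 * ‖x‖) :=
  espresso_gradient_bound_general τ hτ cu ca x hx
end

section
/- (Argmax form of Theorem 1.) Let E be a real inner product space, τ > 0, c^u, c^a ∈ E nonzero, and g(x) := exp(τ·cos(x,c^u)) / (exp(τ·cos(x,c^u)) + exp(τ·cos(x,c^a))) where cos(x,c) := ⟪x, c⟫ / (‖x‖ · ‖c‖). Let x ∈ E be nonzero with cos(x, c^u) > cos(x, c^a) (equivalently g(x) > 1/2, i.e., x is classified as unacceptable by the argmax rule). Then for every δ ∈ E with ‖δ‖ ≤ (1 − τ/(τ + 2·(g(x) − 1/2))) · ‖x‖, one has cos(x + δ, c^u) ≥ cos(x + δ, c^a); that is, the argmax classification of x + δ does not switch to acceptable. -/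
namespace Real

theorem sinh_le_mul_cosh {t : ℝ} (ht : 0 ≤ t) : sinh t ≤ t * cosh t := by
  have hmvt := (convex_Icc 0 t).image_sub_le_mul_sub_of_deriv_le continuous_sinh.continuousOn
    differentiable_sinh.differentiableOn (C := cosh t)
    (fun s hs ↦ by
      rw [interior_Icc] at hs
      rw [deriv_sinh, cosh_le_cosh, abs_of_pos hs.1, abs_of_nonneg ht]
      exact hs.2.le)
    0 (by simp [ht]) t (by simp [ht]) ht
  simpa [mul_comm] using hmvt

theorem tanh_le_self {t : ℝ} (ht : 0 ≤ t) : tanh t ≤ t := by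
  rw [tanh_eq_sinh_div_cosh, div_le_iff₀ (cosh_pos t)]
  exact sinh_le_mul_cosh ht

theorem tanh_nonneg {t : ℝ} (ht : 0 ≤ t) : 0 ≤ tanh t := by
  rw [tanh_eq_sinh_div_cosh]
  exact div_nonneg (sinh_nonneg_iff.mpr ht) (cosh_pos t).le

theorem two_mul_exp_div_exp_add_exp_sub_one (a b : ℝ) :
    2 * (exp a / (exp a + exp b)) - 1 = tanh ((a - b) / 2) := by
  have ha : exp a = exp ((a + b) / 2) * exp ((a - b) / 2) := by rw [← exp_add]; ring_nf
  have hb : exp b = exp ((a + b) / 2) * exp (-((a - b) / 2)) := by rw [← exp_add]; ring_nf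
  rw [tanh_eq, ha, hb]
  have := exp_pos ((a + b) / 2)
  have := exp_pos ((a - b) / 2)
  have := exp_pos (-((a - b) / 2))
  field_simp
  ring

end Real

theorem one_sub_div_add_le {τ s Δ : ℝ} (hτ : 0 < τ) (hs : 0 ≤ s) (h : s ≤ τ * Δ) :
    1 - τ / (τ + s) ≤ Δ :=
  calc 1 - τ / (τ + s) = s / (τ + s) := by field_simp; ring
    _ ≤ s / τ := div_le_div_of_nonneg_left hs hτ (by linarith)
    _ ≤ Δ := (div_le_iff₀' hτ).mpr h

section CosSim

variable {E : Type*} [NormedAddCommGroup E] [InnerProductSpace ℝ E]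

theorem two_mul_espressoG_sub_half (τ : ℝ) (cu ca x : E) :
    2 * (espressoG τ cu ca x - 1 / 2) = Real.tanh (τ * (cosSim x cu - cosSim x ca) / 2) := by
  rw [mul_sub τ, ← Real.two_mul_exp_div_exp_add_exp_sub_one, espressoG]
  ring

theorem abs_real_inner_div_norm_le (x c : E) : |inner ℝ x c / ‖c‖| ≤ ‖x‖ := by
  rw [abs_div, abs_norm]
  exact div_le_of_le_mul₀ (norm_nonneg c) (norm_nonneg x) (abs_real_inner_le_norm x c)

theorem real_inner_div_norm_eq_cosSim_mul_norm (x c : E) :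
    inner ℝ x c / ‖c‖ = cosSim x c * ‖x‖ := by
  rcases eq_or_ne x 0 with rfl | hx
  · simp
  · rw [cosSim, mul_comm ‖x‖, ← div_div, div_mul_cancel₀ _ (norm_ne_zero_iff.mpr hx)]

theorem cosSim_eq_real_inner_div_norm_div_norm (x c : E) :
    cosSim x c = inner ℝ x c / ‖c‖ / ‖x‖ := by
  rw [cosSim, div_div, mul_comm]

theorem cosSim_add_le_cosSim_add_of_two_mul_norm_le {x δ c c' : E}
    (h : 2 * ‖δ‖ ≤ (cosSim x c - cosSim x c') * ‖x‖) :
    cosSim (x + δ) c' ≤ cosSim (x + δ) c := by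
  rw [cosSim_eq_real_inner_div_norm_div_norm, cosSim_eq_real_inner_div_norm_div_norm]
  refine div_le_div_of_nonneg_right ?_ (norm_nonneg _)
  rw [inner_add_left, inner_add_left, add_div, add_div, real_inner_div_norm_eq_cosSim_mul_norm x,
    real_inner_div_norm_eq_cosSim_mul_norm x]
  have hc := abs_le.mp (abs_real_inner_div_norm_le δ c)
  have hc' := abs_le.mp (abs_real_inner_div_norm_le δ c')
  linarith

end CosSim

theorem espresso_certified_robustness_argmax_general
    {E : Type*} [NormedAddCommGroup E] [InnerProductSpace ℝ E]
    (τ : ℝ) (hτ : 0 < τ) (cu ca : E)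
    (x : E) (hclass : cosSim x ca < cosSim x cu) :
    ∀ δ : E,
      ‖δ‖ ≤ (1 - τ / (τ + 2 * (espressoG τ cu ca x - 1 / 2))) * ‖x‖ →
      cosSim (x + δ) ca ≤ cosSim (x + δ) cu := by
  intro δ hδ
  set Δ := cosSim x cu - cosSim x ca
  have hgap : 0 ≤ τ * Δ / 2 := by have : 0 < Δ := sub_pos.mpr hclass; positivity
  have hradius : 1 - τ / (τ + 2 * (espressoG τ cu ca x - 1 / 2)) ≤ Δ / 2 := by
    rw [two_mul_espressoG_sub_half]
    exact one_sub_div_add_le hτ (Real.tanh_nonneg hgap)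
      ((Real.tanh_le_self hgap).trans_eq (by ring))
  apply cosSim_add_le_cosSim_add_of_two_mul_norm_le
  linarith [mul_le_mul_of_nonneg_right hradius (norm_nonneg x)]

/-- Argmax form of Theorem 1: certified robustness of the argmax rule. -/
theorem espresso_certified_robustness_argmax
    {E : Type*} [NormedAddCommGroup E] [InnerProductSpace ℝ E] [CompleteSpace E]
    (τ : ℝ) (hτ : 0 < τ) (cu ca : E) (hcu : cu ≠ 0) (hca : ca ≠ 0)
    (x : E) (hx : x ≠ 0) (hclass : cosSim x ca < cosSim x cu) :
    ∀ δ : E,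
      ‖δ‖ ≤ (1 - τ / (τ + 2 * (espressoG τ cu ca x - 1 / 2))) * ‖x‖ →
      cosSim (x + δ) ca ≤ cosSim (x + δ) cu :=
  espresso_certified_robustness_argmax_general τ hτ cu ca x hclass
end
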